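/- arXiv:2104.10633 — 7 statements merged into one kernel-verified Lean document; each statement's English description precedes it below -/
import Mathlib

section
/- Suppose Z is independent of the collection {V_1, …, V_m; U_0, …, U_n}, in the sense that the random variable Z is independent of the random variable ω ↦ ((V_1(ω), …, V_m(ω)), (U_0(ω), …, U_n(ω))). Then for every i ∈ {1, …, m} with P(Z = i) > 0, E[Y · 1(Z = i)] = P(Z = i) · E[U_{V_i}]; in other words, the conditional expectation E(Y | Z = i) equals E[U_{V_i}]. -/
/-!
The event `{Z = i}` lies in the σ-algebra generated by `Z`, while on it `Y = U_{V_i}` is a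
measurable function of `((V_1, …, V_m), (U_0, …, U_n))`. Independence of `Z` from that vector
makes the integral of `U_{V_i}` over `{Z = i}` factor as `P(Z = i) · E[U_{V_i}]`.
-/

open MeasureTheory ProbabilityTheory

theorem Measurable.apply_of_countable {α ι β : Type*} [MeasurableSpace α] [MeasurableSpace ι]
    [Countable ι] [MeasurableSingletonClass ι] [MeasurableSpace β]
    {f : α → ι} {g : α → ι → β} (hf : Measurable f) (hg : Measurable g) :
    Measurable fun a => g a (f a) :=
  (measurable_from_prod_countable_right (f := fun p : ι × (ι → β) => p.2 p.1)
    fun _ => measurable_pi_apply _).comp (hf.prodMk hg)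

theorem ProbabilityTheory.IndepFun.setIntegral_preimage_eq_mul {Ω α β : Type*}
    [MeasurableSpace Ω] [MeasurableSpace α] [MeasurableSpace β] {μ : Measure Ω}
    {X : Ω → α} {Y : Ω → β} (hXY : IndepFun X Y μ) (hX : Measurable X) (hY : AEMeasurable Y μ)
    {s : Set α} (hs : MeasurableSet s) {f : β → ℝ} (hf : AEStronglyMeasurable f (μ.map Y)) :
    ∫ ω in X ⁻¹' s, f (Y ω) ∂μ = μ.real (X ⁻¹' s) * ∫ ω, f (Y ω) ∂μ :=
  ((IndepFun_iff_Indep X Y μ).mp hXY).setIntegral_eq_mul hX.comap_le hY ⟨s, hs, rfl⟩ hf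

theorem stmt_1_general {Ω : Type*} [MeasureSpace Ω]
    (n m : ℕ)
    (Z : Ω → Fin m) (hZ : Measurable Z)
    (V : Fin m → Ω → Fin (n + 1)) (hV : ∀ i, Measurable (V i))
    (U : Fin (n + 1) → Ω → ℝ) (hUmeas : ∀ j, Measurable (U j))
    (X : Ω → Fin (n + 1)) (hX : ∀ ω, X ω = V (Z ω) ω)
    (Y : Ω → ℝ) (hY : ∀ ω, Y ω = U (X ω) ω)
    (hindep : ProbabilityTheory.IndepFun Z
      (fun ω => ((fun i => V i ω, fun j => U j ω) :
        (Fin m → Fin (n + 1)) × (Fin (n + 1) → ℝ))) volume) :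
    ∀ i : Fin m, 0 < volume {ω | Z ω = i} →
      ∫ ω, (if Z ω = i then Y ω else 0)
        = (volume {ω | Z ω = i}).toReal * ∫ ω, U (V i ω) ω := by
  intro i _
  have hY_on_event : (fun ω => if Z ω = i then Y ω else 0)
      = (Z ⁻¹' {i}).indicator fun ω => U (V i ω) ω := by
    funext ω
    by_cases h : Z ω = i <;> simp [Set.indicator, h, hY, hX]
  rw [hY_on_event, integral_indicator (hZ (measurableSet_singleton i))]
  exact hindep.setIntegral_preimage_eq_mul (f := fun p => p.2 (p.1 i)) hZ
    ((measurable_pi_lambda _ hV).prodMk (measurable_pi_lambda _ hUmeas)).aemeasurable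
    (measurableSet_singleton i)
    (Measurable.apply_of_countable ((measurable_pi_apply i).comp measurable_fst)
      measurable_snd).aestronglyMeasurable

/-- If `Z` is independent of the collection `{V_1,…,V_m; U_0,…,U_n}`, then for
every `i` with `P(Z = i) > 0`, `E[Y · 1(Z = i)] = P(Z = i) · E[U_{V i}]`, i.e.
`E(Y | Z = i) = E[U_{V i}]`. -/
theorem stmt_1 {Ω : Type*} [MeasureSpace Ω] [IsProbabilityMeasure (volume : Measure Ω)]
    (n m : ℕ) (hn : 1 ≤ n) (hm : 1 ≤ m)
    (Z : Ω → Fin m) (hZ : Measurable Z)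
    (V : Fin m → Ω → Fin (n + 1)) (hV : ∀ i, Measurable (V i))
    (U : Fin (n + 1) → Ω → ℝ) (hU : ∀ j, Integrable (U j)) (hUmeas : ∀ j, Measurable (U j))
    (hprod : ∀ i j j', Integrable (fun ω => (if V i ω = j then (1 : ℝ) else 0) * U j' ω))
    (X : Ω → Fin (n + 1)) (hX : ∀ ω, X ω = V (Z ω) ω)
    (Y : Ω → ℝ) (hY : ∀ ω, Y ω = U (X ω) ω)
    (hindep : ProbabilityTheory.IndepFun Z
      (fun ω => ((fun i => V i ω, fun j => U j ω) :
        (Fin m → Fin (n + 1)) × (Fin (n + 1) → ℝ))) volume) :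
    ∀ i : Fin m, 0 < volume {ω | Z ω = i} →
      ∫ ω, (if Z ω = i then Y ω else 0)
        = (volume {ω | Z ω = i}).toReal * ∫ ω, U (V i ω) ω :=
  stmt_1_general n m Z hZ V hV U hUmeas X hX Y hY hindep
end

section
/- (Theorem 1.) Suppose Z is independent of {V_1, …, V_m; U_0, …, U_n} (that is, Z is independent of the random variable ω ↦ ((V_1(ω), …, V_m(ω)), (U_0(ω), …, U_n(ω)))), that P(Z = i) > 0 for every i, and that there is a set S_0 of unordered pairs {i, k} ⊂ {1, …, m} such that (i) for every {i, k} ∈ S_0 and every j ∈ {1, …, n}, E[(U_j − U_0) · (1(V_i = j) − 1(V_k = j))] = E[U_j − U_0] · E[1(V_i = j) − 1(V_k = j)] (zero correlation), and (ii) the matrix A = (a_{s j})_{s ∈ S_0, j ∈ {1,…,n}} has rank at least n (equivalently, the linear map v ↦ A v from ℝⁿ to ℝ^{S_0} is injective). Then A θ = b, and θ is the unique vector c ∈ ℝⁿ satisfying A c = b; hence θ is identifiable from the joint distribution of (X, Y, Z). -/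
/-!
Since `Z` is independent of the potential outcomes, conditioning on `Z = i` replaces `X` by `V_i`
and `Y` by `U_{V_i}`, so `b_{ik} = E[U_{V_i}] - E[U_{V_k}]` and
`a_{ik,j} = P(V_i = j) - P(V_k = j)`. Writing `U_{V_i} = U_0 + ∑_j 1(V_i = j) (U_j - U_0)` turns
`b_{ik}` into `∑_j E[(U_j - U_0) (1(V_i = j) - 1(V_k = j))]`, and zero correlation factors each
term as `θ_j a_{ik,j}`. Uniqueness is the injectivity of `A`.
-/

open MeasureTheory ProbabilityTheory

theorem Fin.apply_eq_apply_zero_add_sum_boole_mul {R : Type*} [Ring R] {n : ℕ}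
    (f : Fin (n + 1) → R) (x : Fin (n + 1)) :
    f x = f 0 + ∑ j : Fin n, (if x = j.succ then 1 else 0) * (f j.succ - f 0) := by
  cases x using Fin.cases with
  | zero => simp [(Fin.succ_ne_zero _).symm]
  | succ k => simp [Fin.succ_inj]

section

variable {Ω : Type*} [MeasurableSpace Ω] {μ : Measure Ω} {p : Ω → Prop} [DecidablePred p]

theorem integral_boole (hp : MeasurableSet {ω | p ω}) :
    ∫ ω, (if p ω then (1 : ℝ) else 0) ∂μ = μ.real {ω | p ω} := by
  rw [← integral_indicator_one hp]
  simp only [Set.indicator_apply, Set.mem_ofPred_eq, Pi.one_apply]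

theorem integrable_boole [IsFiniteMeasure μ] (hp : MeasurableSet {ω | p ω}) :
    Integrable (fun ω => if p ω then (1 : ℝ) else 0) μ := by
  refine ((integrable_const (1 : ℝ)).indicator hp).congr (.of_forall fun ω => ?_)
  simp [Set.indicator_apply]

end

theorem ProbabilityTheory.IndepFun.integral_ite_eq_measureReal_mul
    {Ω β γ : Type*} [MeasurableSpace Ω] {μ : Measure Ω} [IsFiniteMeasure μ]
    [MeasurableSpace β] [MeasurableSingletonClass β] [DecidableEq β] [MeasurableSpace γ]
    {Z : Ω → β} {T : Ω → γ} (hind : IndepFun Z T μ) (hZ : Measurable Z) (z : β)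
    {f : γ → ℝ} (hf : Measurable f) (hfT : Integrable (fun ω => f (T ω)) μ) :
    ∫ ω, (if Z ω = z then f (T ω) else 0) ∂μ = μ.real {ω | Z ω = z} * ∫ ω, f (T ω) ∂μ := by
  have hZz : MeasurableSet {ω | Z ω = z} := hZ (measurableSet_singleton z)
  have hφ : Measurable fun b : β => if b = z then (1 : ℝ) else 0 :=
    Measurable.ite (measurableSet_singleton z) measurable_const measurable_const
  have hind' : IndepFun (fun ω => if Z ω = z then (1 : ℝ) else 0) (fun ω => f (T ω)) μ :=
    hind.comp hφ hf
  calc ∫ ω, (if Z ω = z then f (T ω) else 0) ∂μ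
      = ∫ ω, (if Z ω = z then (1 : ℝ) else 0) * f (T ω) ∂μ := by simp only [boole_mul]
    _ = μ.real {ω | Z ω = z} * ∫ ω, f (T ω) ∂μ := by
      rw [hind'.integral_fun_mul_eq_mul_integral (integrable_boole hZz).aestronglyMeasurable
        hfT.aestronglyMeasurable, integral_boole hZz]

theorem integral_mul_sub_integral_mul_eq_of_uncorrelated
    {Ω : Type*} [MeasurableSpace Ω] {μ : Measure Ω} {f g h : Ω → ℝ}
    (hg : Integrable g μ) (hh : Integrable h μ)
    (hgf : Integrable (fun ω => g ω * f ω) μ) (hhf : Integrable (fun ω => h ω * f ω) μ)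
    (hcorr : ∫ ω, f ω * (g ω - h ω) ∂μ = (∫ ω, f ω ∂μ) * ∫ ω, (g ω - h ω) ∂μ) :
    ∫ ω, g ω * f ω ∂μ - ∫ ω, h ω * f ω ∂μ = (∫ ω, f ω ∂μ) * (∫ ω, g ω ∂μ - ∫ ω, h ω ∂μ) := by
  rw [← integral_sub hg hh, ← hcorr, ← integral_sub hgf hhf]
  simp only [mul_sub, mul_comm]

theorem integrable_and_integral_apply_eq_integral_zero_add_sum {Ω : Type*} [MeasurableSpace Ω]
    {μ : Measure Ω} {n : ℕ} {W : Ω → Fin (n + 1)} {U : Fin (n + 1) → Ω → ℝ}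
    (hU₀ : Integrable (U 0) μ)
    (hU : ∀ j : Fin n,
      Integrable (fun ω => (if W ω = j.succ then (1 : ℝ) else 0) * (U j.succ ω - U 0 ω)) μ) :
    Integrable (fun ω => U (W ω) ω) μ ∧
      ∫ ω, U (W ω) ω ∂μ = ∫ ω, U 0 ω ∂μ +
        ∑ j : Fin n, ∫ ω, (if W ω = j.succ then (1 : ℝ) else 0) * (U j.succ ω - U 0 ω) ∂μ := by
  have hsum := integrable_finsetSum Finset.univ fun j _ => hU j
  have hpt : (fun ω => U (W ω) ω) = fun ω => U 0 ω +
      ∑ j : Fin n, (if W ω = j.succ then (1 : ℝ) else 0) * (U j.succ ω - U 0 ω) :=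
    funext fun ω => Fin.apply_eq_apply_zero_add_sum_boole_mul (fun j => U j ω) (W ω)
  rw [hpt, integral_add hU₀ hsum, integral_finsetSum _ fun j _ => hU j]
  exact ⟨hU₀.add hsum, rfl⟩

section InstrumentalVariable

variable {Ω ι κ : Type*} [MeasurableSpace Ω] {μ : Measure Ω}
  [MeasurableSpace ι] [MeasurableSingletonClass ι] [MeasurableSpace κ] [MeasurableSingletonClass κ]
  {Z : Ω → ι} {V : ι → Ω → κ} {U : κ → Ω → ℝ} {X : Ω → κ}

theorem measureReal_treatment_eq_and_instrument_eq
    (hX : ∀ ω, X ω = V (Z ω) ω)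
    (hindep : IndepFun Z (fun ω => ((fun i => V i ω, fun j => U j ω) : (ι → κ) × (κ → ℝ))) μ)
    (i : ι) (j : κ) :
    μ.real {ω | X ω = j ∧ Z ω = i} = μ.real {ω | Z ω = i} * μ.real {ω | V i ω = j} := by
  have hset : {ω | X ω = j ∧ Z ω = i} = {ω | Z ω = i} ∩ {ω | V i ω = j} := by
    ext ω
    simp only [Set.mem_ofPred_eq, Set.mem_inter_iff, hX]
    constructor
    · rintro ⟨hV, rfl⟩; exact ⟨rfl, hV⟩
    · rintro ⟨rfl, hV⟩; exact ⟨hV, rfl⟩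
  have hVi : Measurable fun p : (ι → κ) × (κ → ℝ) => p.1 i := measurable_fst.eval
  rw [hset, measureReal_def, measureReal_def, measureReal_def, ← ENNReal.toReal_mul]
  exact congrArg ENNReal.toReal (hindep.measure_inter_preimage_eq_mul _ _
    (measurableSet_singleton i) (hVi (measurableSet_singleton j)))

theorem integral_ite_outcome_eq_measureReal_mul [IsFiniteMeasure μ] [DecidableEq ι] [Countable κ]
    {Y : Ω → ℝ} (hX : ∀ ω, X ω = V (Z ω) ω) (hY : ∀ ω, Y ω = U (X ω) ω) (hZ : Measurable Z)
    (hindep : IndepFun Z (fun ω => ((fun i => V i ω, fun j => U j ω) : (ι → κ) × (κ → ℝ))) μ)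
    (i : ι) (hUV : Integrable (fun ω => U (V i ω) ω) μ) :
    ∫ ω, (if Z ω = i then Y ω else 0) ∂μ = μ.real {ω | Z ω = i} * ∫ ω, U (V i ω) ω ∂μ := by
  have hY' : (fun ω => if Z ω = i then Y ω else 0) =
      fun ω => if Z ω = i then U (V i ω) ω else 0 := by
    funext ω
    split_ifs with h
    · rw [hY, hX, h]
    · rfl
  have heval : Measurable fun q : κ × (κ → ℝ) => q.2 q.1 :=
    measurable_from_prod_countable_right fun x => measurable_pi_apply x
  have hVi : Measurable fun p : (ι → κ) × (κ → ℝ) => p.1 i := measurable_fst.eval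
  have hf : Measurable fun p : (ι → κ) × (κ → ℝ) => p.2 (p.1 i) :=
    heval.comp (hVi.prodMk measurable_snd)
  rw [hY']
  exact hindep.integral_ite_eq_measureReal_mul hZ i hf hUV

end InstrumentalVariable

theorem stmt_3_general {Ω : Type*} [MeasureSpace Ω] [IsProbabilityMeasure (volume : Measure Ω)]
    (n m : ℕ)
    (Z : Ω → Fin m) (hZ : Measurable Z)
    (V : Fin m → Ω → Fin (n + 1)) (hV : ∀ i, Measurable (V i))
    (U : Fin (n + 1) → Ω → ℝ) (hU : ∀ j, Integrable (U j))
    (hprod : ∀ i j j', Integrable (fun ω => (if V i ω = j then (1 : ℝ) else 0) * U j' ω))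
    (X : Ω → Fin (n + 1)) (hX : ∀ ω, X ω = V (Z ω) ω)
    (Y : Ω → ℝ) (hY : ∀ ω, Y ω = U (X ω) ω)
    (hindep : ProbabilityTheory.IndepFun Z
      (fun ω => ((fun i => V i ω, fun j => U j ω) :
        (Fin m → Fin (n + 1)) × (Fin (n + 1) → ℝ))) volume)
    (hpos : ∀ i : Fin m, 0 < volume {ω | Z ω = i})
    (θ : Fin n → ℝ) (hθ : ∀ j : Fin n, θ j = ∫ ω, (U j.succ ω - U 0 ω))
    (S₀ : Finset (Fin m × Fin m))
    (a : Fin m × Fin m → Fin n → ℝ)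
    (ha : ∀ s j, a s j =
        (volume {ω | X ω = j.succ ∧ Z ω = s.1}).toReal / (volume {ω | Z ω = s.1}).toReal
      - (volume {ω | X ω = j.succ ∧ Z ω = s.2}).toReal / (volume {ω | Z ω = s.2}).toReal)
    (b : Fin m × Fin m → ℝ)
    (hb : ∀ s, b s =
        (∫ ω, (if Z ω = s.1 then Y ω else 0)) / (volume {ω | Z ω = s.1}).toReal
      - (∫ ω, (if Z ω = s.2 then Y ω else 0)) / (volume {ω | Z ω = s.2}).toReal)
    -- condition (i): zero correlation of `U_j − U_0` with `1(V_i = j) − 1(V_k = j)`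
    (hcorr : ∀ s ∈ S₀, ∀ j : Fin n,
      ∫ ω, (U j.succ ω - U 0 ω) *
          ((if V s.1 ω = j.succ then (1 : ℝ) else 0) - (if V s.2 ω = j.succ then (1 : ℝ) else 0))
        = (∫ ω, (U j.succ ω - U 0 ω)) *
          ∫ ω, ((if V s.1 ω = j.succ then (1 : ℝ) else 0)
            - (if V s.2 ω = j.succ then (1 : ℝ) else 0)))
    -- condition (ii): rank(A) ≥ n, i.e. the map `c ↦ A c` is injective
    (hrank : Function.Injective
      (fun c : Fin n → ℝ => fun s : S₀ => ∑ j, a s.1 j * c j)) :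
    (∀ s ∈ S₀, ∑ j, a s j * θ j = b s) ∧
      ∀ c : Fin n → ℝ, (∀ s ∈ S₀, ∑ j, a s j * c j = b s) → c = θ := by
  simp only [← measureReal_def] at ha hb
  have hZi : ∀ i, volume.real {ω | Z ω = i} ≠ 0 := fun i =>
    ENNReal.toReal_ne_zero.mpr ⟨(hpos i).ne', measure_ne_top _ _⟩
  have hVi : ∀ i j, MeasurableSet {ω | V i ω = j} := fun i j => hV i (measurableSet_singleton j)
  have hgain : ∀ i (j : Fin n), Integrable fun ω =>
      (if V i ω = j.succ then (1 : ℝ) else 0) * (U j.succ ω - U 0 ω) := fun i j => by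
    simp only [mul_sub]
    exact (hprod i j.succ j.succ).sub (hprod i j.succ 0)
  have hcondY : ∀ i, (∫ ω, (if Z ω = i then Y ω else 0)) / volume.real {ω | Z ω = i} =
      (∫ ω, U 0 ω) + ∑ j : Fin n,
        ∫ ω, (if V i ω = j.succ then (1 : ℝ) else 0) * (U j.succ ω - U 0 ω) := fun i => by
    obtain ⟨hint, hdecomp⟩ :=
      integrable_and_integral_apply_eq_integral_zero_add_sum (hU 0) (hgain i)
    rw [integral_ite_outcome_eq_measureReal_mul hX hY hZ hindep i hint,
      mul_div_cancel_left₀ _ (hZi i), hdecomp]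
  have hcondX : ∀ i (j : Fin n), volume.real {ω | X ω = j.succ ∧ Z ω = i} /
      volume.real {ω | Z ω = i} = ∫ ω, (if V i ω = j.succ then (1 : ℝ) else 0) := fun i j => by
    rw [measureReal_treatment_eq_and_instrument_eq hX hindep, mul_div_cancel_left₀ _ (hZi i),
      integral_boole (hVi i j.succ)]
  have hmain : ∀ s ∈ S₀, ∑ j, a s j * θ j = b s := by
    intro s hs
    have hterm : ∀ j, a s j * θ j =
        (∫ ω, (if V s.1 ω = j.succ then (1 : ℝ) else 0) * (U j.succ ω - U 0 ω)) -
          ∫ ω, (if V s.2 ω = j.succ then (1 : ℝ) else 0) * (U j.succ ω - U 0 ω) := fun j => by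
      rw [integral_mul_sub_integral_mul_eq_of_uncorrelated (integrable_boole (hVi _ _))
        (integrable_boole (hVi _ _)) (hgain s.1 j) (hgain s.2 j) (hcorr s hs j),
        ha, hcondX, hcondX, hθ, mul_comm]
    rw [hb, hcondY, hcondY, Finset.sum_congr rfl fun j _ => hterm j, Finset.sum_sub_distrib]
    ring
  exact ⟨hmain, fun c hc => hrank (funext fun s => (hc s.1 s.2).trans (hmain s.1 s.2).symm)⟩

/-- Theorem 1: Under independence of `Z` from `{V_1,…,V_m; U_0,…,U_n}`,
positivity of `P(Z = i)`, the zero-correlation condition (i) on `S₀`, and the rank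
condition (ii), the causal effect vector `θ` (with `θ_j = E[U_j − U_0]`) satisfies `A θ = b`
and is the unique solution of this linear system, hence identifiable. -/
theorem stmt_3 {Ω : Type*} [MeasureSpace Ω] [IsProbabilityMeasure (volume : Measure Ω)]
    (n m : ℕ) (hn : 1 ≤ n) (hm : 1 ≤ m)
    (Z : Ω → Fin m) (hZ : Measurable Z)
    (V : Fin m → Ω → Fin (n + 1)) (hV : ∀ i, Measurable (V i))
    (U : Fin (n + 1) → Ω → ℝ) (hU : ∀ j, Integrable (U j)) (hUmeas : ∀ j, Measurable (U j))
    (hprod : ∀ i j j', Integrable (fun ω => (if V i ω = j then (1 : ℝ) else 0) * U j' ω))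
    (X : Ω → Fin (n + 1)) (hX : ∀ ω, X ω = V (Z ω) ω)
    (Y : Ω → ℝ) (hY : ∀ ω, Y ω = U (X ω) ω)
    (hindep : ProbabilityTheory.IndepFun Z
      (fun ω => ((fun i => V i ω, fun j => U j ω) :
        (Fin m → Fin (n + 1)) × (Fin (n + 1) → ℝ))) volume)
    (hpos : ∀ i : Fin m, 0 < volume {ω | Z ω = i})
    (θ : Fin n → ℝ) (hθ : ∀ j : Fin n, θ j = ∫ ω, (U j.succ ω - U 0 ω))
    (S₀ : Finset (Fin m × Fin m))
    (a : Fin m × Fin m → Fin n → ℝ)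
    (ha : ∀ s j, a s j =
        (volume {ω | X ω = j.succ ∧ Z ω = s.1}).toReal / (volume {ω | Z ω = s.1}).toReal
      - (volume {ω | X ω = j.succ ∧ Z ω = s.2}).toReal / (volume {ω | Z ω = s.2}).toReal)
    (b : Fin m × Fin m → ℝ)
    (hb : ∀ s, b s =
        (∫ ω, (if Z ω = s.1 then Y ω else 0)) / (volume {ω | Z ω = s.1}).toReal
      - (∫ ω, (if Z ω = s.2 then Y ω else 0)) / (volume {ω | Z ω = s.2}).toReal)
    -- condition (i): zero correlation of `U_j − U_0` with `1(V_i = j) − 1(V_k = j)`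
    (hcorr : ∀ s ∈ S₀, ∀ j : Fin n,
      ∫ ω, (U j.succ ω - U 0 ω) *
          ((if V s.1 ω = j.succ then (1 : ℝ) else 0) - (if V s.2 ω = j.succ then (1 : ℝ) else 0))
        = (∫ ω, (U j.succ ω - U 0 ω)) *
          ∫ ω, ((if V s.1 ω = j.succ then (1 : ℝ) else 0)
            - (if V s.2 ω = j.succ then (1 : ℝ) else 0)))
    -- condition (ii): rank(A) ≥ n, i.e. the map `c ↦ A c` is injective
    (hrank : Function.Injective
      (fun c : Fin n → ℝ => fun s : S₀ => ∑ j, a s.1 j * c j)) :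
    (∀ s ∈ S₀, ∑ j, a s j * θ j = b s) ∧
      ∀ c : Fin n → ℝ, (∀ s ∈ S₀, ∑ j, a s j * c j = b s) → c = θ :=
  stmt_3_general n m Z hZ V hV U hU hprod X hX Y hY hindep hpos θ hθ S₀ a ha b hb hcorr hrank
end

section
/- (Theorem 2.) Suppose that for every pair z, z' ∈ [0,1] and every j ∈ {1, …, n}, E[(1(V(z') = j) − 1(V(z) = j)) · (U_j − U_0)] = E[1(V(z') = j) − 1(V(z) = j)] · E[U_j − U_0]. Suppose each q_j is differentiable on [0,1] with derivative a_j = q_j'. Then μ is differentiable on [0,1] and μ'(z) = Σ_{j=1}^{n} θ_j · a_j(z) for all z ∈ [0,1]. Moreover, if the functions a_1, …, a_n are linearly independent (i.e. Σ_j c_j a_j(z) = 0 for all z ∈ [0,1] implies c_1 = ⋯ = c_n = 0), then θ is the unique vector c ∈ ℝⁿ with μ'(z) = Σ_j c_j a_j(z) for all z ∈ [0,1]; hence θ is identifiable. -/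
/-!
Write `D_j(ω) = 1(V(z') = j) − 1(V(z) = j)`. Since `U_{V(z)} = U_0 + ∑_{j ≥ 1} 1(V(z) = j) (U_j − U_0)`,
the increment `μ(z') − μ(z)` is `∑_{j ≥ 1} E[D_j (U_j − U_0)]`, and the zero-correlation condition
factors each term as `E[D_j] θ_j = (q_j(z') − q_j(z)) θ_j`. So on `[0,1]` the function `μ` differs
from `∑_j θ_j q_j` by a constant, which gives `μ'`. Derivatives within `[0,1]` are unique, so any
`c` with `μ' = ∑_j c_j a_j` satisfies `∑_j (c_j − θ_j) a_j = 0` on `[0,1]`, whence `c = θ`.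
-/

open MeasureTheory

theorem Fin.apply_eq_apply_zero_add_sum_succ {R : Type*} [CommRing R] {n : ℕ}
    (f : Fin (n + 1) → R) (k : Fin (n + 1)) :
    f k = f 0 + ∑ j : Fin n, (if k = j.succ then (1 : R) else 0) * (f j.succ - f 0) := by
  induction k using Fin.cases with
  | zero => simp [(Fin.succ_ne_zero _).symm]
  | succ k => simp [Fin.succ_inj]

theorem ite_eq_one_zero_eq_indicator {Ω α : Type*} [DecidableEq α] (X : Ω → α) (j : α) :
    (fun ω => if X ω = j then (1 : ℝ) else 0) = {ω | X ω = j}.indicator 1 := by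
  ext ω
  simp [Set.indicator_apply]

section Increment

variable {Ω : Type*} [MeasurableSpace Ω] {P : Measure Ω} {n : ℕ}
  {X X' : Ω → Fin (n + 1)} {U : Fin (n + 1) → Ω → ℝ}

theorem integrable_ite_eq_one_zero [IsFiniteMeasure P] (hX : Measurable X) (j : Fin (n + 1)) :
    Integrable (fun ω => if X ω = j then (1 : ℝ) else 0) P := by
  rw [ite_eq_one_zero_eq_indicator]
  exact (integrable_const 1).indicator (hX (measurableSet_singleton j))

theorem integral_ite_eq_one_zero (hX : Measurable X) (j : Fin (n + 1)) :
    ∫ ω, (if X ω = j then (1 : ℝ) else 0) ∂P = P.real {ω | X ω = j} := by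
  rw [ite_eq_one_zero_eq_indicator]
  exact integral_indicator_one (hX (measurableSet_singleton j))

theorem integrable_ite_mul_sub
    (hprod : ∀ j j', Integrable (fun ω => (if X ω = j then (1 : ℝ) else 0) * U j' ω) P)
    (j : Fin n) :
    Integrable (fun ω => (if X ω = j.succ then (1 : ℝ) else 0) * (U j.succ ω - U 0 ω)) P := by
  simp_rw [mul_sub]
  exact (hprod j.succ j.succ).sub (hprod j.succ 0)

theorem integral_comp_eq_add_sum (hU0 : Integrable (U 0) P)
    (hprod : ∀ j j', Integrable (fun ω => (if X ω = j then (1 : ℝ) else 0) * U j' ω) P) :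
    ∫ ω, U (X ω) ω ∂P = ∫ ω, U 0 ω ∂P
      + ∑ j : Fin n, ∫ ω, (if X ω = j.succ then (1 : ℝ) else 0) * (U j.succ ω - U 0 ω) ∂P := by
  have hint := integrable_ite_mul_sub hprod
  simp_rw [← integral_finsetSum _ fun j _ => hint j,
    ← integral_add hU0 (integrable_finsetSum _ fun j _ => hint j)]
  exact integral_congr_ae (.of_forall fun ω => Fin.apply_eq_apply_zero_add_sum_succ (U · ω) _)

theorem integral_comp_sub_integral_comp_of_uncorrelated [IsFiniteMeasure P]
    (hX : Measurable X) (hX' : Measurable X') (hU0 : Integrable (U 0) P)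
    (hprod : ∀ j j', Integrable (fun ω => (if X ω = j then (1 : ℝ) else 0) * U j' ω) P)
    (hprod' : ∀ j j', Integrable (fun ω => (if X' ω = j then (1 : ℝ) else 0) * U j' ω) P)
    (hcorr : ∀ j : Fin n,
      ∫ ω, ((if X' ω = j.succ then (1 : ℝ) else 0) - (if X ω = j.succ then (1 : ℝ) else 0))
          * (U j.succ ω - U 0 ω) ∂P
        = (∫ ω, ((if X' ω = j.succ then (1 : ℝ) else 0)
              - (if X ω = j.succ then (1 : ℝ) else 0)) ∂P)
          * ∫ ω, (U j.succ ω - U 0 ω) ∂P) :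
    ∫ ω, U (X' ω) ω ∂P - ∫ ω, U (X ω) ω ∂P
      = ∑ j : Fin n, (∫ ω, (U j.succ ω - U 0 ω) ∂P)
          * (P.real {ω | X' ω = j.succ} - P.real {ω | X ω = j.succ}) := by
  rw [integral_comp_eq_add_sum hU0 hprod', integral_comp_eq_add_sum hU0 hprod,
    add_sub_add_left_eq_sub, ← Finset.sum_sub_distrib]
  refine Finset.sum_congr rfl fun j _ => ?_
  rw [← integral_sub (integrable_ite_mul_sub hprod' j) (integrable_ite_mul_sub hprod j)]
  simp_rw [← sub_mul]
  rw [hcorr j, integral_sub (integrable_ite_eq_one_zero hX' _) (integrable_ite_eq_one_zero hX _),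
    integral_ite_eq_one_zero hX', integral_ite_eq_one_zero hX, mul_comm]

end Increment

theorem HasDerivWithinAt.of_sub_eq_sub {f g : ℝ → ℝ} {g' z : ℝ} {s : Set ℝ}
    (h : ∀ x ∈ s, f x - f z = g x - g z) (hg : HasDerivWithinAt g g' s z) :
    HasDerivWithinAt f g' s z :=
  ((hg.sub_const (g z)).const_add (f z)).congr (fun x hx => by linarith [h x hx]) (by ring)

theorem eq_of_forall_sum_mul_eq {ι α : Type*} [Fintype ι] {s : Set α} {a : ι → α → ℝ}
    (hindep : ∀ c : ι → ℝ, (∀ z ∈ s, ∑ j, c j * a j z = 0) → c = 0) {c d : ι → ℝ}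
    (h : ∀ z ∈ s, ∑ j, c j * a j z = ∑ j, d j * a j z) : c = d :=
  sub_eq_zero.1 <| hindep (c - d) fun z hz => by
    simp only [Pi.sub_apply, sub_mul, Finset.sum_sub_distrib, h z hz, sub_self]

theorem stmt_5_general {Ω : Type*} [MeasureSpace Ω] [IsProbabilityMeasure (volume : Measure Ω)]
    (n : ℕ)
    (V : ℝ → Ω → Fin (n + 1)) (hV : ∀ z, Measurable (V z))
    (U : Fin (n + 1) → Ω → ℝ) (hU : ∀ j, Integrable (U j))
    (hprod : ∀ z j j', Integrable (fun ω => (if V z ω = j then (1 : ℝ) else 0) * U j' ω))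
    (θ : Fin n → ℝ) (hθ : ∀ j : Fin n, θ j = ∫ ω, (U j.succ ω - U 0 ω))
    (μ : ℝ → ℝ) (hμ : ∀ z, μ z = ∫ ω, U (V z ω) ω)
    (q : Fin (n + 1) → ℝ → ℝ) (hq : ∀ j z, q j z = (volume {ω | V z ω = j}).toReal)
    (hcorr : ∀ z ∈ Set.Icc (0 : ℝ) 1, ∀ z' ∈ Set.Icc (0 : ℝ) 1, ∀ j : Fin n,
      ∫ ω, ((if V z' ω = j.succ then (1 : ℝ) else 0) - (if V z ω = j.succ then (1 : ℝ) else 0))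
          * (U j.succ ω - U 0 ω)
        = (∫ ω, ((if V z' ω = j.succ then (1 : ℝ) else 0)
              - (if V z ω = j.succ then (1 : ℝ) else 0)))
          * ∫ ω, (U j.succ ω - U 0 ω))
    (a : Fin n → ℝ → ℝ)
    (hdiff : ∀ j : Fin n, ∀ z ∈ Set.Icc (0 : ℝ) 1,
      HasDerivWithinAt (q j.succ) (a j z) (Set.Icc (0 : ℝ) 1) z) :
    (∀ z ∈ Set.Icc (0 : ℝ) 1,
      HasDerivWithinAt μ (∑ j : Fin n, θ j * a j z) (Set.Icc (0 : ℝ) 1) z) ∧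
    ((∀ c : Fin n → ℝ, (∀ z ∈ Set.Icc (0 : ℝ) 1, ∑ j : Fin n, c j * a j z = 0) → c = 0) →
      ∀ c : Fin n → ℝ,
        (∀ z ∈ Set.Icc (0 : ℝ) 1,
          HasDerivWithinAt μ (∑ j : Fin n, c j * a j z) (Set.Icc (0 : ℝ) 1) z) → c = θ) := by
  have hincr : ∀ z ∈ Set.Icc (0 : ℝ) 1, ∀ z' ∈ Set.Icc (0 : ℝ) 1,
      μ z' - μ z = ∑ j, θ j * q j.succ z' - ∑ j, θ j * q j.succ z := by
    intro z hz z' hz'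
    simp only [hμ, hθ, hq, ← Finset.sum_sub_distrib, ← mul_sub, ← measureReal_def]
    exact integral_comp_sub_integral_comp_of_uncorrelated (hV z) (hV z') (hU 0) (hprod z)
      (hprod z') (hcorr z hz z' hz')
  have hderiv : ∀ z ∈ Set.Icc (0 : ℝ) 1,
      HasDerivWithinAt μ (∑ j, θ j * a j z) (Set.Icc (0 : ℝ) 1) z := fun z hz =>
    .of_sub_eq_sub (fun x hx => hincr z hz x hx)
      (.fun_sum fun j _ => (hdiff j z hz).const_mul (θ j))
  refine ⟨hderiv, fun hindep c hc => eq_of_forall_sum_mul_eq hindep fun z hz => ?_⟩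
  exact ((uniqueDiffOn_Icc zero_lt_one) z hz).eq_deriv _ (hc z hz) (hderiv z hz)

/-- Theorem 2: under the zero-correlation condition for all pairs `z, z' ∈ [0,1]`,
if each `q_j` is differentiable on `[0,1]` with derivative `a_j`, then `μ` is differentiable
on `[0,1]` with `μ'(z) = ∑_j θ_j a_j(z)`; and if the `a_j` are linearly independent, `θ` is the
unique vector `c` with `μ'(z) = ∑_j c_j a_j(z)` on `[0,1]`, hence identifiable. -/
theorem stmt_5 {Ω : Type*} [MeasureSpace Ω] [IsProbabilityMeasure (volume : Measure Ω)]
    (n : ℕ) (hn : 1 ≤ n)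
    (V : ℝ → Ω → Fin (n + 1)) (hV : ∀ z, Measurable (V z))
    (U : Fin (n + 1) → Ω → ℝ) (hU : ∀ j, Integrable (U j))
    (hprod : ∀ z j j', Integrable (fun ω => (if V z ω = j then (1 : ℝ) else 0) * U j' ω))
    (θ : Fin n → ℝ) (hθ : ∀ j : Fin n, θ j = ∫ ω, (U j.succ ω - U 0 ω))
    (μ : ℝ → ℝ) (hμ : ∀ z, μ z = ∫ ω, U (V z ω) ω)
    (q : Fin (n + 1) → ℝ → ℝ) (hq : ∀ j z, q j z = (volume {ω | V z ω = j}).toReal)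
    (hcorr : ∀ z ∈ Set.Icc (0 : ℝ) 1, ∀ z' ∈ Set.Icc (0 : ℝ) 1, ∀ j : Fin n,
      ∫ ω, ((if V z' ω = j.succ then (1 : ℝ) else 0) - (if V z ω = j.succ then (1 : ℝ) else 0))
          * (U j.succ ω - U 0 ω)
        = (∫ ω, ((if V z' ω = j.succ then (1 : ℝ) else 0)
              - (if V z ω = j.succ then (1 : ℝ) else 0)))
          * ∫ ω, (U j.succ ω - U 0 ω))
    (a : Fin n → ℝ → ℝ)
    (hdiff : ∀ j : Fin n, ∀ z ∈ Set.Icc (0 : ℝ) 1,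
      HasDerivWithinAt (q j.succ) (a j z) (Set.Icc (0 : ℝ) 1) z) :
    (∀ z ∈ Set.Icc (0 : ℝ) 1,
      HasDerivWithinAt μ (∑ j : Fin n, θ j * a j z) (Set.Icc (0 : ℝ) 1) z) ∧
    ((∀ c : Fin n → ℝ, (∀ z ∈ Set.Icc (0 : ℝ) 1, ∑ j : Fin n, c j * a j z = 0) → c = 0) →
      ∀ c : Fin n → ℝ,
        (∀ z ∈ Set.Icc (0 : ℝ) 1,
          HasDerivWithinAt μ (∑ j : Fin n, c j * a j z) (Set.Icc (0 : ℝ) 1) z) → c = θ) :=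
  stmt_5_general n V hV U hU hprod θ hθ μ hμ q hq hcorr a hdiff
end

section
/- (Chain rule under the expectation, the core computation in the proof of Theorem 3.) The function z ↦ E[f(g(z, U), U)] is differentiable on ℝ, with derivative (d/dz) E[f(g(z, U), U)] = E[(∂f/∂x)(g(z, U), U) · (∂g/∂z)(z, U)] for every z ∈ ℝ. -/
open MeasureTheory

section

variable {α : Type*} [MeasurableSpace α] {μ : Measure α} [IsFiniteMeasure μ]
  {𝕜 : Type*} [RCLike 𝕜] {G : Type*} [NormedAddCommGroup G] [NormedSpace ℝ G] [NormedSpace 𝕜 G]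

theorem hasDerivAt_integral_of_norm_deriv_le_const {F F' : 𝕜 → α → G} {x₀ : 𝕜} {K : ℝ}
    (hF_meas : ∀ x, AEStronglyMeasurable (F x) μ) (hF_int : Integrable (F x₀) μ)
    (hF'_meas : AEStronglyMeasurable (F' x₀) μ) (h_bound : ∀ x a, ‖F' x a‖ ≤ K)
    (h_diff : ∀ x a, HasDerivAt (F · a) (F' x a) x) :
    HasDerivAt (fun x ↦ ∫ a, F x a ∂μ) (∫ a, F' x₀ a ∂μ) x₀ :=
  (hasDerivAt_integral_of_dominated_loc_of_deriv_le Filter.univ_mem (.of_forall hF_meas) hF_int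
    hF'_meas (.of_forall fun a x _ ↦ h_bound x a) (integrable_const K)
    (.of_forall fun a x _ ↦ h_diff x a)).2

end

theorem stmt_6_general {Ω : Type*} [MeasureSpace Ω] [IsProbabilityMeasure (volume : Measure Ω)]
    {E : Type*} [MeasurableSpace E] (U : Ω → E) (hU : Measurable U)
    (f f' g g' : ℝ × E → ℝ) (C : ℝ)
    (hfm : Measurable f) (hf'm : Measurable f') (hgm : Measurable g) (hg'm : Measurable g')
    (hfd : ∀ u x, HasDerivAt (fun x => f (x, u)) (f' (x, u)) x)
    (hgd : ∀ u z, HasDerivAt (fun z => g (z, u)) (g' (z, u)) z)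
    (hfb : ∀ x u, |f (x, u)| ≤ C) (hf'b : ∀ x u, |f' (x, u)| ≤ C)
    (hg'b : ∀ z u, |g' (z, u)| ≤ C) :
    ∀ z : ℝ, HasDerivAt (fun z => ∫ ω, f (g (z, U ω), U ω))
      (∫ ω, f' (g (z, U ω), U ω) * g' (z, U ω)) z := by
  intro z₀
  have hF_meas : ∀ z, Measurable fun ω ↦ f (g (z, U ω), U ω) := by fun_prop
  have hF'_meas : Measurable fun ω ↦ f' (g (z₀, U ω), U ω) * g' (z₀, U ω) := by fun_prop
  refine hasDerivAt_integral_of_norm_deriv_le_const (K := C * C)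
    (fun z ↦ (hF_meas z).aestronglyMeasurable)
    (.of_bound (hF_meas z₀).aestronglyMeasurable C (.of_forall fun ω ↦ hfb _ _))
    hF'_meas.aestronglyMeasurable (fun z ω ↦ ?_) (fun z ω ↦ (hfd _ _).comp z (hgd _ z))
  rw [Real.norm_eq_abs, abs_mul]
  exact mul_le_mul (hf'b _ _) (hg'b _ _) (abs_nonneg _) ((abs_nonneg _).trans (hf'b 0 (U ω)))

/-- Chain rule under the expectation, core computation in the proof of Theorem 3:
`z ↦ E[f(g(z,U),U)]` is differentiable with derivative `E[(∂f/∂x)(g(z,U),U) · (∂g/∂z)(z,U)]`. -/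
theorem stmt_6 {Ω : Type*} [MeasureSpace Ω] [IsProbabilityMeasure (volume : Measure Ω)]
    {E : Type*} [MeasurableSpace E] (U : Ω → E) (hU : Measurable U)
    (f f' g g' : ℝ × E → ℝ) (C : ℝ)
    (hfm : Measurable f) (hf'm : Measurable f') (hgm : Measurable g) (hg'm : Measurable g')
    (hfd : ∀ u x, HasDerivAt (fun x => f (x, u)) (f' (x, u)) x)
    (hf'c : ∀ u, Continuous fun x => f' (x, u))
    (hgd : ∀ u z, HasDerivAt (fun z => g (z, u)) (g' (z, u)) z)
    (hfb : ∀ x u, |f (x, u)| ≤ C) (hf'b : ∀ x u, |f' (x, u)| ≤ C)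
    (hg'b : ∀ z u, |g' (z, u)| ≤ C) :
    ∀ z : ℝ, HasDerivAt (fun z => ∫ ω, f (g (z, U ω), U ω))
      (∫ ω, f' (g (z, U ω), U ω) * g' (z, U ω)) z :=
  stmt_6_general U hU f f' g g' C hfm hf'm hgm hg'm hfd hgd hfb hf'b hg'b
end

section
/- (Theorem 3, scalar case.) Suppose in addition that for every z ∈ ℝ, E[(∂f/∂x)(g(z, U), U) · (∂g/∂z)(z, U)] = E[(∂f/∂x)(g(z, U), U)] · E[(∂g/∂z)(z, U)] (i.e. ∂Y/∂X and ∂X/∂Z are uncorrelated conditional on Z = z). Define a(z) = E[(∂g/∂z)(z, U)] and φ(z) = E[(∂f/∂x)(g(z, U), U)]. Then the function z ↦ E[f(g(z, U), U)] is differentiable, its derivative b(z) satisfies a(z) · φ(z) = b(z) for every z, and consequently at every z with a(z) ≠ 0 one has φ(z) = b(z)/a(z), so φ(z) is identifiable. -/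
/-!
Differentiate `z ↦ E[f(g(z, U), U)]` under the integral sign: pointwise in `ω` the chain rule
gives the derivative `f'(g(z, U), U) · g'(z, U)`, which is bounded by `C²` uniformly in `z`, so
dominated convergence yields `b(z) = E[f'(g(z, U), U) · g'(z, U)]`. The zero-correlation
hypothesis factorises this expectation as `φ(z) · a(z)`, and dividing by `a(z) ≠ 0` identifies
`φ(z)`.
-/

open MeasureTheory

section StructuralModel

variable {Ω E : Type*} [MeasurableSpace Ω] [MeasurableSpace E] {U : Ω → E}

lemma measurable_comp_structural {h k : ℝ × E → ℝ} (hU : Measurable U) (hh : Measurable h)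
    (hk : Measurable k) (z : ℝ) : Measurable fun ω => h (k (z, U ω), U ω) :=
  hh.comp ((hk.comp (measurable_const.prodMk hU)).prodMk hU)

lemma hasDerivAt_integral_structural {μ : Measure Ω} [IsFiniteMeasure μ] (hU : Measurable U)
    {f f' g g' : ℝ × E → ℝ} {C : ℝ}
    (hfm : Measurable f) (hf'm : Measurable f') (hgm : Measurable g) (hg'm : Measurable g')
    (hfd : ∀ u x, HasDerivAt (fun x => f (x, u)) (f' (x, u)) x)
    (hgd : ∀ u z, HasDerivAt (fun z => g (z, u)) (g' (z, u)) z)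
    (hfb : ∀ x u, |f (x, u)| ≤ C) (hf'b : ∀ x u, |f' (x, u)| ≤ C)
    (hg'b : ∀ z u, |g' (z, u)| ≤ C) (z₀ : ℝ) :
    HasDerivAt (fun z => ∫ ω, f (g (z, U ω), U ω) ∂μ)
      (∫ ω, f' (g (z₀, U ω), U ω) * g' (z₀, U ω) ∂μ) z₀ := by
  have hF : ∀ z, Measurable fun ω => f (g (z, U ω), U ω) :=
    measurable_comp_structural hU hfm hgm
  have hF' : Measurable fun ω => f' (g (z₀, U ω), U ω) * g' (z₀, U ω) :=
    (measurable_comp_structural hU hf'm hgm z₀).mul (hg'm.comp (measurable_const.prodMk hU))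
  have hF_int : Integrable (fun ω => f (g (z₀, U ω), U ω)) μ :=
    (integrable_const C).mono' (hF z₀).aestronglyMeasurable
      (.of_forall fun ω => hfb (g (z₀, U ω)) (U ω))
  have hF'_le : ∀ᵐ ω ∂μ, ∀ z ∈ Metric.ball z₀ 1,
      ‖f' (g (z, U ω), U ω) * g' (z, U ω)‖ ≤ C * C := .of_forall fun ω z _ => by
    rw [Real.norm_eq_abs, abs_mul]
    have hf' := hf'b (g (z, U ω)) (U ω)
    exact mul_le_mul hf' (hg'b z (U ω)) (abs_nonneg _) ((abs_nonneg _).trans hf')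
  have hchain : ∀ᵐ ω ∂μ, ∀ z ∈ Metric.ball z₀ 1, HasDerivAt (fun z => f (g (z, U ω), U ω))
      (f' (g (z, U ω), U ω) * g' (z, U ω)) z := .of_forall fun ω z _ => by
    exact (hfd (U ω) (g (z, U ω))).comp z (hgd (U ω) z)
  exact (hasDerivAt_integral_of_dominated_loc_of_deriv_le (Metric.ball_mem_nhds z₀ one_pos)
    (.of_forall fun z => (hF z).aestronglyMeasurable) hF_int hF'.aestronglyMeasurable hF'_le
    (integrable_const _) hchain).2

end StructuralModel

theorem stmt_7_general {Ω : Type*} [MeasureSpace Ω] [IsProbabilityMeasure (volume : Measure Ω)]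
    {E : Type*} [MeasurableSpace E] (U : Ω → E) (hU : Measurable U)
    (f f' g g' : ℝ × E → ℝ) (C : ℝ)
    (hfm : Measurable f) (hf'm : Measurable f') (hgm : Measurable g) (hg'm : Measurable g')
    (hfd : ∀ u x, HasDerivAt (fun x => f (x, u)) (f' (x, u)) x)
    (hgd : ∀ u z, HasDerivAt (fun z => g (z, u)) (g' (z, u)) z)
    (hfb : ∀ x u, |f (x, u)| ≤ C) (hf'b : ∀ x u, |f' (x, u)| ≤ C)
    (hg'b : ∀ z u, |g' (z, u)| ≤ C)
    (hcorr : ∀ z : ℝ,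
      ∫ ω, f' (g (z, U ω), U ω) * g' (z, U ω)
        = (∫ ω, f' (g (z, U ω), U ω)) * ∫ ω, g' (z, U ω))
    (a φ : ℝ → ℝ)
    (ha : ∀ z, a z = ∫ ω, g' (z, U ω))
    (hφ : ∀ z, φ z = ∫ ω, f' (g (z, U ω), U ω)) :
    Differentiable ℝ (fun z => ∫ ω, f (g (z, U ω), U ω)) ∧
    (∀ z, a z * φ z = deriv (fun z => ∫ ω, f (g (z, U ω), U ω)) z) ∧
    (∀ z, a z ≠ 0 → φ z = deriv (fun z => ∫ ω, f (g (z, U ω), U ω)) z / a z) := by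
  have hb := hasDerivAt_integral_structural (μ := volume) hU hfm hf'm hgm hg'm hfd hgd hfb hf'b
    hg'b
  have hderiv : ∀ z, a z * φ z = deriv (fun z => ∫ ω, f (g (z, U ω), U ω)) z := fun z => by
    rw [(hb z).deriv, hcorr z, ha, hφ, mul_comm]
  refine ⟨fun z => (hb z).differentiableAt, hderiv, fun z hz => ?_⟩
  rw [← hderiv z, mul_div_cancel_left₀ _ hz]

/-- Theorem 3, scalar case: under the conditional zero-correlation of
`∂Y/∂X` and `∂X/∂Z` given `Z = z`, with `a(z) = E[(∂g/∂z)(z,U)]` and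
`φ(z) = E[(∂f/∂x)(g(z,U),U)]`, the function `F(z) = E[f(g(z,U),U)]` is differentiable,
its derivative `b(z)` satisfies `a(z)·φ(z) = b(z)`, and wherever `a(z) ≠ 0`,
`φ(z) = b(z)/a(z)`, so `φ(z)` is identifiable. -/
theorem stmt_7 {Ω : Type*} [MeasureSpace Ω] [IsProbabilityMeasure (volume : Measure Ω)]
    {E : Type*} [MeasurableSpace E] (U : Ω → E) (hU : Measurable U)
    (f f' g g' : ℝ × E → ℝ) (C : ℝ)
    (hfm : Measurable f) (hf'm : Measurable f') (hgm : Measurable g) (hg'm : Measurable g')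
    (hfd : ∀ u x, HasDerivAt (fun x => f (x, u)) (f' (x, u)) x)
    (hf'c : ∀ u, Continuous fun x => f' (x, u))
    (hgd : ∀ u z, HasDerivAt (fun z => g (z, u)) (g' (z, u)) z)
    (hfb : ∀ x u, |f (x, u)| ≤ C) (hf'b : ∀ x u, |f' (x, u)| ≤ C)
    (hg'b : ∀ z u, |g' (z, u)| ≤ C)
    (hcorr : ∀ z : ℝ,
      ∫ ω, f' (g (z, U ω), U ω) * g' (z, U ω)
        = (∫ ω, f' (g (z, U ω), U ω)) * ∫ ω, g' (z, U ω))
    (a φ : ℝ → ℝ)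
    (ha : ∀ z, a z = ∫ ω, g' (z, U ω))
    (hφ : ∀ z, φ z = ∫ ω, f' (g (z, U ω), U ω)) :
    Differentiable ℝ (fun z => ∫ ω, f (g (z, U ω), U ω)) ∧
    (∀ z, a z * φ z = deriv (fun z => ∫ ω, f (g (z, U ω), U ω)) z) ∧
    (∀ z, a z ≠ 0 → φ z = deriv (fun z => ∫ ω, f (g (z, U ω), U ω)) z / a z) :=
  stmt_7_general U hU f f' g g' C hfm hf'm hgm hg'm hfd hgd hfb hf'b hg'b hcorr a φ ha hφ
end

section
/- (Theorem 3, vector case.) Suppose that for every z ∈ ℝᵐ and all i ∈ {1, …, m}, j ∈ {1, …, n}, E[(∂f/∂x_j)(g(z, U), U) · (∂g_j/∂z_i)(z, U)] = E[(∂f/∂x_j)(g(z, U), U)] · E[(∂g_j/∂z_i)(z, U)] (componentwise zero correlation, conditional on Z = z). Define the m × n matrix a(z) with entries a(z)_{i j} = E[(∂g_j/∂z_i)(z, U)] and the vector φ(z) ∈ ℝⁿ with components φ(z)_j = E[(∂f/∂x_j)(g(z, U), U)]. Then the function F(z) = E[f(g(z, U), U)] is differentiable on ℝᵐ and its gradient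 b(z) ∈ ℝᵐ satisfies b(z)_i = Σ_{j=1}^{n} a(z)_{i j} φ(z)_j for all i, i.e. a(z) φ(z) = b(z). Moreover, if rank(a(z)) ≥ n (the linear map v ↦ a(z) v from ℝⁿ to ℝᵐ is injective), then φ(z) is the unique vector v ∈ ℝⁿ with a(z) v = b(z), so φ(z) is identifiable. -/
/-!
Since all partial derivatives are uniformly bounded, the expectation may be differentiated under
the integral sign; with the chain rule this gives
`∂F/∂z_i (z) = ∑_j E[(∂f/∂x_j)(g(z,U),U) · (∂g_j/∂z_i)(z,U)]`, and zero correlation factors each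
summand as `a(z)_{ij} φ(z)_j`. Identification is then injectivity of `v ↦ a(z) v`.
-/

open MeasureTheory

section CoordForm

variable {ι : Type*} [Fintype ι]

def coordForm (v : ι → ℝ) : (ι → ℝ) →L[ℝ] ℝ :=
  ∑ i, v i • ContinuousLinearMap.proj i

@[simp]
theorem coordForm_apply (v w : ι → ℝ) : coordForm v w = ∑ i, v i * w i := by
  simp [coordForm]

theorem norm_coordForm_le (v : ι → ℝ) : ‖coordForm v‖ ≤ ∑ i, |v i| :=
  ContinuousLinearMap.opNorm_le_bound _ (by positivity) fun w => by
    rw [coordForm_apply, Finset.sum_mul]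
    refine (Finset.abs_sum_le_sum_abs _ _).trans (Finset.sum_le_sum fun i _ => ?_)
    rw [abs_mul]
    exact mul_le_mul_of_nonneg_left (norm_le_pi_norm w i) (abs_nonneg _)

theorem HasFDerivAt.comp_coordForm {κ : Type*} [Fintype κ] {f : (κ → ℝ) → ℝ}
    {g : (ι → ℝ) → κ → ℝ} {f' : κ → ℝ} {g' : ι → κ → ℝ} {z : ι → ℝ}
    (hf : HasFDerivAt f (coordForm f') (g z))
    (hg : ∀ j, HasFDerivAt (fun z => g z j) (coordForm fun i => g' i j) z) :
    HasFDerivAt (fun z => f (g z)) (coordForm fun i => ∑ j, f' j * g' i j) z := by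
  refine (hf.comp z (hasFDerivAt_pi.2 hg)).congr_fderiv (ContinuousLinearMap.ext fun w => ?_)
  simp only [ContinuousLinearMap.coe_comp, Function.comp_apply, coordForm_apply,
    ContinuousLinearMap.pi_apply, Finset.mul_sum, Finset.sum_mul]
  rw [Finset.sum_comm]
  exact Finset.sum_congr rfl fun i _ => Finset.sum_congr rfl fun j _ => by ring

variable {Ω : Type*} [MeasurableSpace Ω] {μ : Measure Ω}

theorem integral_coordForm {v : Ω → ι → ℝ} (hv : ∀ i, Integrable (fun ω => v ω i) μ) :
    ∫ ω, coordForm (v ω) ∂μ = coordForm fun i => ∫ ω, v ω i ∂μ := by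
  simp only [coordForm]
  rw [integral_finsetSum _ fun i _ => (hv i).smul_const _]
  exact Finset.sum_congr rfl fun i _ => integral_smul_const _ _

theorem aestronglyMeasurable_coordForm {v : Ω → ι → ℝ}
    (hv : ∀ i, AEStronglyMeasurable (fun ω => v ω i) μ) :
    AEStronglyMeasurable (fun ω => coordForm (v ω)) μ :=
  Finset.aestronglyMeasurable_fun_sum _ fun i _ => (hv i).smul_const _

end CoordForm

theorem hasFDerivAt_integral_of_norm_fderiv_le {Ω : Type*} [MeasurableSpace Ω] {μ : Measure Ω}
    [IsFiniteMeasure μ] {X G : Type*} [NormedAddCommGroup X] [NormedSpace ℝ X]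
    [NormedAddCommGroup G] [NormedSpace ℝ G] [CompleteSpace G]
    {F : X → Ω → G} {F' : X → Ω → X →L[ℝ] G} {z₀ : X} {K : ℝ}
    (hF_meas : ∀ z, AEStronglyMeasurable (F z) μ) (hF_int : Integrable (F z₀) μ)
    (hF'_meas : AEStronglyMeasurable (F' z₀) μ) (hF'_le : ∀ z ω, ‖F' z ω‖ ≤ K)
    (hF : ∀ z ω, HasFDerivAt (F · ω) (F' z ω) z) :
    HasFDerivAt (fun z => ∫ ω, F z ω ∂μ) (∫ ω, F' z₀ ω ∂μ) z₀ :=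
  hasFDerivAt_integral_of_dominated_of_fderiv_le (bound := fun _ => K) Filter.univ_mem
    (.of_forall hF_meas) hF_int hF'_meas (ae_of_all _ fun ω z _ => hF'_le z ω)
    (integrable_const K) (ae_of_all _ fun ω z _ => hF z ω)

section StructuralModel

variable {Ω E ι κ : Type*} [MeasurableSpace Ω] [MeasurableSpace E] [Fintype ι] [Fintype κ]
  {μ : Measure Ω} [IsFiniteMeasure μ] {U : Ω → E}
  {f : (κ → ℝ) × E → ℝ} {g : (ι → ℝ) × E → κ → ℝ}
  {f' : κ → (κ → ℝ) × E → ℝ} {g' : ι → κ → (ι → ℝ) × E → ℝ} {C : ℝ}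

theorem hasFDerivAt_integral_comp_of_bounded_partials (hU : Measurable U)
    (hfm : Measurable f) (hgm : Measurable g)
    (hf'm : ∀ j, Measurable (f' j)) (hg'm : ∀ i j, Measurable (g' i j))
    (hfd : ∀ u x, HasFDerivAt (fun x => f (x, u)) (coordForm fun j => f' j (x, u)) x)
    (hgd : ∀ u z j, HasFDerivAt (fun z => g (z, u) j) (coordForm fun i => g' i j (z, u)) z)
    (hfb : ∀ x u, |f (x, u)| ≤ C) (hf'b : ∀ j x u, |f' j (x, u)| ≤ C)
    (hg'b : ∀ i j z u, |g' i j (z, u)| ≤ C) (z₀ : ι → ℝ) :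
    HasFDerivAt (fun z => ∫ ω, f (g (z, U ω), U ω) ∂μ)
      (coordForm fun i => ∑ j, ∫ ω, f' j (g (z₀, U ω), U ω) * g' i j (z₀, U ω) ∂μ) z₀ := by
  have hmeas_arg (z : ι → ℝ) : Measurable fun ω => (g (z, U ω), U ω) :=
    (hgm.comp (measurable_const.prodMk hU)).prodMk hU
  have hmeas_prod (z : ι → ℝ) (i : ι) (j : κ) :
      Measurable fun ω => f' j (g (z, U ω), U ω) * g' i j (z, U ω) :=
    ((hf'm j).comp (hmeas_arg z)).mul ((hg'm i j).comp (measurable_const.prodMk hU))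
  have hprod_le (z : ι → ℝ) (ω : Ω) (i : ι) (j : κ) :
      |f' j (g (z, U ω), U ω) * g' i j (z, U ω)| ≤ C * C := by
    rw [abs_mul]
    exact mul_le_mul (hf'b _ _ _) (hg'b _ _ _ _) (abs_nonneg _)
      ((abs_nonneg _).trans (hf'b j (g (z, U ω)) (U ω)))
  have hint_prod (i : ι) (j : κ) :
      Integrable (fun ω => f' j (g (z₀, U ω), U ω) * g' i j (z₀, U ω)) μ :=
    .of_bound (hmeas_prod z₀ i j).aestronglyMeasurable (C * C) (ae_of_all _ (hprod_le z₀ · i j))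
  have hderiv := hasFDerivAt_integral_of_norm_fderiv_le (μ := μ)
    (F := fun z ω => f (g (z, U ω), U ω))
    (F' := fun z ω => coordForm fun i => ∑ j, f' j (g (z, U ω), U ω) * g' i j (z, U ω))
    (K := ∑ _i : ι, ∑ _j : κ, C * C) (z₀ := z₀)
    (fun z => (hfm.comp (hmeas_arg z)).aestronglyMeasurable)
    (.of_bound (hfm.comp (hmeas_arg z₀)).aestronglyMeasurable C (ae_of_all _ fun ω => hfb _ _))
    (aestronglyMeasurable_coordForm fun i =>
      Finset.aestronglyMeasurable_fun_sum _ fun j _ => (hmeas_prod z₀ i j).aestronglyMeasurable)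
    (fun z ω => (norm_coordForm_le _).trans (Finset.sum_le_sum fun i _ =>
      (Finset.abs_sum_le_sum_abs _ _).trans (Finset.sum_le_sum fun j _ => hprod_le z ω i j)))
    (fun z ω => (hfd (U ω) _).comp_coordForm (hgd (U ω) z))
  rwa [integral_coordForm fun i => integrable_finsetSum _ fun j _ => hint_prod i j,
    funext fun i => integral_finsetSum _ fun j _ => hint_prod i j] at hderiv

end StructuralModel

theorem stmt_8_general {Ω : Type*} [MeasureSpace Ω] [IsProbabilityMeasure (volume : Measure Ω)]
    {E : Type*} [MeasurableSpace E] (U : Ω → E) (hU : Measurable U)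
    (n m : ℕ)
    (f : (Fin n → ℝ) × E → ℝ) (g : (Fin m → ℝ) × E → Fin n → ℝ)
    (f' : Fin n → (Fin n → ℝ) × E → ℝ) (g' : Fin m → Fin n → (Fin m → ℝ) × E → ℝ)
    (C : ℝ)
    (hfm : Measurable f) (hgm : Measurable g)
    (hf'm : ∀ j, Measurable (f' j)) (hg'm : ∀ i j, Measurable (g' i j))
    (hfd : ∀ u x, HasFDerivAt (fun x => f (x, u))
      (∑ j : Fin n, f' j (x, u) • (ContinuousLinearMap.proj j : (Fin n → ℝ) →L[ℝ] ℝ)) x)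
    (hgd : ∀ u z j, HasFDerivAt (fun z => g (z, u) j)
      (∑ i : Fin m, g' i j (z, u) • (ContinuousLinearMap.proj i : (Fin m → ℝ) →L[ℝ] ℝ)) z)
    (hfb : ∀ x u, |f (x, u)| ≤ C) (hf'b : ∀ j x u, |f' j (x, u)| ≤ C)
    (hg'b : ∀ i j z u, |g' i j (z, u)| ≤ C)
    (hcorr : ∀ (z : Fin m → ℝ) (i : Fin m) (j : Fin n),
      ∫ ω, f' j (g (z, U ω), U ω) * g' i j (z, U ω)
        = (∫ ω, f' j (g (z, U ω), U ω)) * ∫ ω, g' i j (z, U ω))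
    (a : (Fin m → ℝ) → Fin m → Fin n → ℝ)
    (ha : ∀ z i j, a z i j = ∫ ω, g' i j (z, U ω))
    (φ : (Fin m → ℝ) → Fin n → ℝ)
    (hφ : ∀ z j, φ z j = ∫ ω, f' j (g (z, U ω), U ω))
    (b : (Fin m → ℝ) → Fin m → ℝ)
    (hb : ∀ z i, b z i = ∑ j : Fin n, a z i j * φ z j) :
    (∀ z : Fin m → ℝ, HasFDerivAt (fun z => ∫ ω, f (g (z, U ω), U ω))
      (∑ i : Fin m, b z i • (ContinuousLinearMap.proj i : (Fin m → ℝ) →L[ℝ] ℝ)) z) ∧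
    ∀ z : Fin m → ℝ,
      Function.Injective (fun v : Fin n → ℝ => fun i : Fin m => ∑ j : Fin n, a z i j * v j) →
        ∀ v : Fin n → ℝ, (∀ i : Fin m, ∑ j : Fin n, a z i j * v j = b z i) → v = φ z := by
  have hgrad (z : Fin m → ℝ) :
      (fun i => ∑ j, ∫ ω, f' j (g (z, U ω), U ω) * g' i j (z, U ω)) = b z := by
    funext i
    rw [hb]
    exact Finset.sum_congr rfl fun j _ => by rw [hcorr, ha, hφ, mul_comm]
  refine ⟨fun z => ?_, fun z hinj v hv => hinj (funext fun i => by simp only [hv i, hb])⟩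
  have hF := hasFDerivAt_integral_comp_of_bounded_partials (μ := volume)
    hU hfm hgm hf'm hg'm hfd hgd hfb hf'b hg'b z
  rw [hgrad] at hF
  exact hF

/-- Theorem 3, vector case: with `a(z)_{ij} = E[(∂g_j/∂z_i)(z,U)]`,
`φ(z)_j = E[(∂f/∂x_j)(g(z,U),U)]` and `b(z)_i = ∑_j a(z)_{ij} φ(z)_j`, under componentwise
conditional zero correlation the function `F(z) = E[f(g(z,U),U)]` is differentiable with
gradient `b(z)`, i.e. `a(z) φ(z) = b(z)`; and if `rank(a(z)) ≥ n` (the map `v ↦ a(z)v` is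
injective) then `φ(z)` is the unique solution `v` of `a(z) v = b(z)`, hence identifiable. -/
theorem stmt_8 {Ω : Type*} [MeasureSpace Ω] [IsProbabilityMeasure (volume : Measure Ω)]
    {E : Type*} [MeasurableSpace E] (U : Ω → E) (hU : Measurable U)
    (n m : ℕ) (hn : 1 ≤ n) (hm : 1 ≤ m)
    (f : (Fin n → ℝ) × E → ℝ) (g : (Fin m → ℝ) × E → Fin n → ℝ)
    (f' : Fin n → (Fin n → ℝ) × E → ℝ) (g' : Fin m → Fin n → (Fin m → ℝ) × E → ℝ)
    (C : ℝ)
    (hfm : Measurable f) (hgm : Measurable g)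
    (hf'm : ∀ j, Measurable (f' j)) (hg'm : ∀ i j, Measurable (g' i j))
    (hfd : ∀ u x, HasFDerivAt (fun x => f (x, u))
      (∑ j : Fin n, f' j (x, u) • (ContinuousLinearMap.proj j : (Fin n → ℝ) →L[ℝ] ℝ)) x)
    (hf'c : ∀ j u, Continuous fun x => f' j (x, u))
    (hgd : ∀ u z j, HasFDerivAt (fun z => g (z, u) j)
      (∑ i : Fin m, g' i j (z, u) • (ContinuousLinearMap.proj i : (Fin m → ℝ) →L[ℝ] ℝ)) z)
    (hg'c : ∀ i j u, Continuous fun z => g' i j (z, u))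
    (hfb : ∀ x u, |f (x, u)| ≤ C) (hf'b : ∀ j x u, |f' j (x, u)| ≤ C)
    (hg'b : ∀ i j z u, |g' i j (z, u)| ≤ C)
    (hcorr : ∀ (z : Fin m → ℝ) (i : Fin m) (j : Fin n),
      ∫ ω, f' j (g (z, U ω), U ω) * g' i j (z, U ω)
        = (∫ ω, f' j (g (z, U ω), U ω)) * ∫ ω, g' i j (z, U ω))
    (a : (Fin m → ℝ) → Fin m → Fin n → ℝ)
    (ha : ∀ z i j, a z i j = ∫ ω, g' i j (z, U ω))
    (φ : (Fin m → ℝ) → Fin n → ℝ)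
    (hφ : ∀ z j, φ z j = ∫ ω, f' j (g (z, U ω), U ω))
    (b : (Fin m → ℝ) → Fin m → ℝ)
    (hb : ∀ z i, b z i = ∑ j : Fin n, a z i j * φ z j) :
    (∀ z : Fin m → ℝ, HasFDerivAt (fun z => ∫ ω, f (g (z, U ω), U ω))
      (∑ i : Fin m, b z i • (ContinuousLinearMap.proj i : (Fin m → ℝ) →L[ℝ] ℝ)) z) ∧
    ∀ z : Fin m → ℝ,
      Function.Injective (fun v : Fin n → ℝ => fun i : Fin m => ∑ j : Fin n, a z i j * v j) →
        ∀ v : Fin n → ℝ, (∀ i : Fin m, ∑ j : Fin n, a z i j * v j = b z i) → v = φ z :=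
  stmt_8_general U hU n m f g f' g' C hfm hgm hf'm hg'm hfd hgd hfb hf'b hg'b hcorr a ha φ hφ b hb
end

section
/- (Example 4.) The function z ↦ E[s(t(z) + U₂)] is differentiable on ℝ with derivative (d/dz) E[s(t(z) + U₂)] = t'(z) · E[s'(t(z) + U₂)] for every z ∈ ℝ. Consequently, at every z with t'(z) ≠ 0, E[s'(t(z) + U₂)] = b(z)/a(z), where b(z) = (d/dz) E[s(t(z) + U₂)] and a(z) = t'(z); that is, in the model Y = s(X) + U₁, X = t(Z) + U₂ with Z independent of (U₁, U₂), the conditional expectation E(s'(X) | Z = z) = E(∂Y/∂X | Z = z) is identified as b(z)/a(z). -/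
/-! Since `s'` is bounded, `y ↦ ∫ s (y + U₂)` may be differentiated under the integral sign
(dominated convergence with a constant bound); the rest is the chain rule through `t`. -/

open MeasureTheory

theorem hasDerivAt_integral_comp_add {Ω E : Type*} [MeasurableSpace Ω] {μ : Measure Ω}
    [IsFiniteMeasure μ] [NormedAddCommGroup E] [NormedSpace ℝ E] [CompleteSpace E]
    {X : Ω → ℝ} (hX : AEMeasurable X μ) {s : ℝ → E} (hs : Differentiable ℝ s)
    {C C' : ℝ} (hsC : ∀ x, ‖s x‖ ≤ C) (hs'C : ∀ x, ‖deriv s x‖ ≤ C') (y : ℝ) :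
    HasDerivAt (fun y => ∫ ω, s (y + X ω) ∂μ) (∫ ω, deriv s (y + X ω) ∂μ) y := by
  have hF_meas : ∀ y' : ℝ, AEStronglyMeasurable (fun ω => s (y' + X ω)) μ := fun y' =>
    hs.continuous.comp_aestronglyMeasurable (hX.const_add y').aestronglyMeasurable
  refine (hasDerivAt_integral_of_dominated_loc_of_deriv_le
    (F' := fun y' ω => deriv s (y' + X ω)) (bound := fun _ => C')
    (Metric.ball_mem_nhds y one_pos) (.of_forall hF_meas)
    ((integrable_const C).mono' (hF_meas y) (.of_forall fun ω => hsC _))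
    ((stronglyMeasurable_deriv s).aestronglyMeasurable.comp_aemeasurable (hX.const_add y))
    (.of_forall fun ω y' _ => hs'C _) (integrable_const C')
    (.of_forall fun ω y' _ => ?_)).2
  exact (hs (y' + X ω)).hasDerivAt.comp_add_const y' (X ω)

/-- Example 4: `z ↦ E[s(t(z) + U₂)]` is differentiable with derivative
`t'(z) · E[s'(t(z) + U₂)]`; consequently, wherever `t'(z) ≠ 0`,
`E[s'(t(z) + U₂)] = b(z)/a(z)` with `b(z)` the derivative of `z ↦ E[s(t(z) + U₂)]` and
`a(z) = t'(z)`, identifying `E(s'(X) | Z = z) = E(∂Y/∂X | Z = z)`. -/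
theorem stmt_10 {Ω : Type*} [MeasureSpace Ω] [IsProbabilityMeasure (volume : Measure Ω)]
    (U₂ : Ω → ℝ) (hU₂ : Measurable U₂)
    (s t : ℝ → ℝ) (hs : ContDiff ℝ 1 s) (ht : ContDiff ℝ 1 t)
    (C : ℝ) (hsb : ∀ x, |s x| ≤ C) (hs'b : ∀ x, |deriv s x| ≤ C) :
    (∀ z : ℝ, HasDerivAt (fun z => ∫ ω, s (t z + U₂ ω))
      (deriv t z * ∫ ω, deriv s (t z + U₂ ω)) z) ∧
    ∀ z : ℝ, deriv t z ≠ 0 →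
      (∫ ω, deriv s (t z + U₂ ω))
        = deriv (fun z => ∫ ω, s (t z + U₂ ω)) z / deriv t z := by
  have hderiv : ∀ z : ℝ, HasDerivAt (fun z => ∫ ω, s (t z + U₂ ω))
      (deriv t z * ∫ ω, deriv s (t z + U₂ ω)) z := fun z =>
    (hasDerivAt_integral_comp_add hU₂.aemeasurable (hs.differentiable one_ne_zero)
      hsb hs'b (t z)).scomp z ((ht.differentiable one_ne_zero) z).hasDerivAt
  refine ⟨hderiv, fun z hz => ?_⟩
  rw [(hderiv z).deriv, mul_div_cancel_left₀ _ hz]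
end
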